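/- arXiv:1405.1615 — 3 statements merged into one kernel-verified Lean document; each statement's English description precedes it below -/
import Mathlib

section
/- In a multi-player perfect-information game with probabilistic transitions, countable state space, nonempty finite action sets, and bounded continuous payoff functions, for every player i the expected payoff function σ ↦ u_i(σ) is continuous on the set Σ of strategy profiles, where each Σ_i = ∏_{s : i(s)=i} A(s) carries the product topology of the finite discrete spaces A(s) and Σ = ∏_{i∈N} Σ_i carries the product topology. -/
open MeasureTheory

/-- A multi-player perfect-information game with probabilistic transitions:
a set of players `N`, a state space `S` with initial state `init`, a controlling
player `ctrl s` and a nonempty finite action set `act s` for every state `s`, and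
a transition probability measure `q s a` for every state `s` and action `a`.
The supports of the transition measures are mutually disjoint and every state is
reachable from the initial state, so every state is reached from `init` via
exactly one finite history (states correspond bijectively to histories). -/
structure PGame (N S A : Type*) where
  init : S
  ctrl : S → N
  act : S → Finset A
  act_nonempty : ∀ s, (act s).Nonempty
  q : S → A → PMF S
  unique_pred : ∀ z s a s' a', a ∈ act s → a' ∈ act s' →
    z ∈ (q s a).support → z ∈ (q s' a').support → s = s' ∧ a = a'
  init_not_succ : ∀ s a, a ∈ act s → init ∉ (q s a).support
  reach : ∀ z, Relation.ReflTransGen (fun s t => ∃ a ∈ act s, t ∈ (q s a).support) init z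

namespace PGame

variable {N S A : Type*} (G : PGame N S A)

/-- A play: an infinite alternating sequence of states and actions, starting at the
initial state, choosing legal actions and moving to successor states. -/
def IsPlay (p : ℕ → S × A) : Prop :=
  (p 0).1 = G.init ∧
    ∀ m, (p m).2 ∈ G.act (p m).1 ∧ (p (m + 1)).1 ∈ (G.q (p m).1 (p m).2).support

/-- The set of plays of the game. -/
def Play : Type _ := { p : ℕ → S × A // G.IsPlay p }

/-- The set of plays carries the topology generated by the cylinder sets, i.e. the
topology induced by the product of the discrete topologies. -/
instance : TopologicalSpace G.Play :=
  letI : TopologicalSpace S := ⊥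
  letI : TopologicalSpace A := ⊥
  inferInstanceAs (TopologicalSpace { p : ℕ → S × A // G.IsPlay p })

/-- The Borel σ-algebra on plays. -/
instance : MeasurableSpace G.Play := borel G.Play

/-- A strategy of player `i`: a choice of a legal action in every state controlled
by `i`. -/
def Strat (i : N) : Type _ := { f : S → A // ∀ s, G.ctrl s = i → f s ∈ G.act s }

/-- A strategy profile. -/
def Profile : Type _ := ∀ i : N, G.Strat i

/-- The profile `σ` with player `i`'s strategy replaced by `τi`. -/
noncomputable def comb (i : N) (τi : G.Strat i) (σ : G.Profile) : G.Profile :=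
  haveI := Classical.decEq N
  Function.update σ i τi

/-- The action that profile `σ` plays in state `s`. -/
def playFun (σ : G.Profile) (s : S) : A := (σ (G.ctrl s)).1 s

/-- The cylinder set of plays agreeing with the play `p0` on the first `n`
coordinates. -/
def cylSet (p0 : G.Play) (n : ℕ) : Set G.Play := { p : G.Play | ∀ m < n, p.1 m = p0.1 m }

open Classical in
/-- `μ` is the family of Borel probability measures on plays induced by the strategy
profiles via the Ionescu–Tulcea construction applied to `q`; it is uniquely
characterized by the probabilities it assigns to the cylinder sets: actions are
chosen deterministically according to the profile and states are drawn from the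
transition probabilities. -/
def IsInducedMeasure (μ : G.Profile → Measure G.Play) : Prop :=
  (∀ σ, IsProbabilityMeasure (μ σ)) ∧
    ∀ (σ : G.Profile) (p0 : G.Play) (n : ℕ),
      μ σ (G.cylSet p0 n) =
        ∏ m ∈ Finset.range n,
          ((if (p0.1 m).2 = G.playFun σ (p0.1 m).1 then 1 else 0) *
            (if m + 1 < n then G.q (p0.1 m).1 (p0.1 m).2 ((p0.1 (m + 1)).1) else 1))

/-- Expected payoff of player `i` under the profile `σ`: the integral of `u i`
against the induced measure. -/
noncomputable def epay (μ : G.Profile → Measure G.Play) (u : N → G.Play → ℝ)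
    (σ : G.Profile) (i : N) : ℝ :=
  ∫ p, u i p ∂(μ σ)

/-- Nash equilibrium: no player can improve his expected payoff by a unilateral
deviation. -/
def IsNash (μ : G.Profile → Measure G.Play) (u : N → G.Play → ℝ) (σ : G.Profile) : Prop :=
  ∀ (i : N) (τi : G.Strat i), G.epay μ u (G.comb i τi σ) i ≤ G.epay μ u σ i

/-- Secure equilibrium: a Nash equilibrium such that no player `i` has a deviation
keeping his own expected payoff equal, making all opponents weakly worse off, and
making some opponent strictly worse off. -/
def IsSecure (μ : G.Profile → Measure G.Play) (u : N → G.Play → ℝ) (σ : G.Profile) : Prop :=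
  G.IsNash μ u σ ∧
    ¬ ∃ (i : N) (τi : G.Strat i),
        G.epay μ u (G.comb i τi σ) i = G.epay μ u σ i ∧
        (∀ j : N, j ≠ i → G.epay μ u (G.comb i τi σ) j ≤ G.epay μ u σ j) ∧
        (∃ k : N, k ≠ i ∧ G.epay μ u (G.comb i τi σ) k < G.epay μ u σ k)

/-- The strategy space `Σ_i` of player `i` carries the product topology of the
discrete (finite) action spaces. -/
instance (i : N) : TopologicalSpace (G.Strat i) :=
  letI : TopologicalSpace A := ⊥
  inferInstanceAs (TopologicalSpace { f : S → A // ∀ s, G.ctrl s = i → f s ∈ G.act s })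

/-- The space `Σ` of strategy profiles carries the product topology. -/
instance : TopologicalSpace G.Profile :=
  inferInstanceAs (TopologicalSpace (∀ i : N, G.Strat i))

end PGame

/-! Fix `σ` and `ε`. By continuity of `u i`, the oscillation of `u i` over the cylinder of the
first `n` moves of a play tends to `0` pointwise, hence in `L¹(P_σ)` by dominated convergence:
for some `n`, `u i` is close in mean to a function of the first `n` moves. These histories range
over a countable set, so under `P_σ` they are concentrated up to `ε` on finitely many of them,
which visit only a finite set `F` of states. Every profile agreeing with `σ` on `F` (a
neighbourhood of `σ` in the product topology) gives each of these histories the same probability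
as `σ`, so the two expected payoffs differ by `O(ε)`. -/

open Filter Topology

section FiberOscillation

variable {X Y : Type*}

/-- For unbounded `f` the supremum takes the junk value `0`; every bound below assumes `|f| ≤ C`. -/
noncomputable def fiberOsc (f : X → ℝ) (π : X → Y) (r : Y → X) (y : Y) : ℝ :=
  ⨆ x : π ⁻¹' {y}, |f x - f (r y)|

section Bounded

variable {f : X → ℝ} {C : ℝ} (hf : ∀ x, |f x| ≤ C)
include hf

theorem abs_sub_le_two_mul_of_abs_le (x x' : X) : |f x - f x'| ≤ 2 * C := by
  linarith [abs_sub (f x) (f x'), hf x, hf x']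

theorem fiberOsc_le (π : X → Y) (r : Y → X) (y : Y) : fiberOsc f π r y ≤ 2 * C :=
  Real.iSup_le (fun x => abs_sub_le_two_mul_of_abs_le hf x _)
    (by linarith [abs_nonneg (f (r y)), hf (r y)])

theorem abs_sub_le_fiberOsc (π : X → Y) (r : Y → X) (x : X) :
    |f x - f (r (π x))| ≤ fiberOsc f π r (π x) :=
  le_ciSup (f := fun x' : π ⁻¹' {π x} => |f x' - f (r (π x))|)
    ⟨2 * C, by rintro _ ⟨x', rfl⟩; exact abs_sub_le_two_mul_of_abs_le hf x' _⟩ ⟨x, rfl⟩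

end Bounded

theorem fiberOsc_nonneg (f : X → ℝ) (π : X → Y) (r : Y → X) (y : Y) : 0 ≤ fiberOsc f π r y :=
  Real.iSup_nonneg fun _ => abs_nonneg _

end FiberOscillation

section CountableQuotient

variable {X Y : Type*} [MeasurableSpace X] [MeasurableSpace Y] [MeasurableSingletonClass Y]
  [Countable Y]

theorem exists_finset_measure_compl_lt (ρ : Measure Y) [IsFiniteMeasure ρ] {δ : ENNReal}
    (hδ : 0 < δ) : ∃ E : Finset Y, ρ (↑E)ᶜ < δ := by
  have hlim := tendsto_measure_iInter_atTop (μ := ρ) (s := fun E : Finset Y => (↑E : Set Y)ᶜ)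
    (fun E => E.finite_toSet.measurableSet.compl.nullMeasurableSet)
    (fun _ _ hEF => Set.compl_subset_compl.2 (Finset.coe_subset.2 hEF)) ⟨∅, measure_ne_top _ _⟩
  have hempty : ⋂ E : Finset Y, (↑E : Set Y)ᶜ = ∅ :=
    Set.eq_empty_of_forall_notMem fun y hy => Set.mem_iInter.1 hy {y} (by simp)
  rw [hempty, measure_empty] at hlim
  exact (hlim.eventually_lt_const hδ).exists

theorem abs_integral_sub_integral_le_of_measure_singleton_eq {ρ ρ' : Measure Y}
    [IsProbabilityMeasure ρ] [IsProbabilityMeasure ρ'] {E : Set Y}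
    (hE : ∀ y ∈ E, ρ' {y} = ρ {y}) {k : Y → ℝ} {K : ℝ} (hk : ∀ y, |k y| ≤ K) :
    |∫ y, k y ∂ρ' - ∫ y, k y ∂ρ| ≤ 2 * K * ρ.real Eᶜ := by
  have hEm : MeasurableSet E := E.to_countable.measurableSet
  have hrestrict : ρ'.restrict E = ρ.restrict E := by
    refine Measure.ext_iff_singleton.2 fun y => ?_
    rw [Measure.restrict_apply (measurableSet_singleton y),
      Measure.restrict_apply (measurableSet_singleton y)]
    by_cases hy : y ∈ E
    · rw [Set.singleton_inter_of_mem hy, hE y hy]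
    · rw [Set.singleton_inter_eq_empty.2 hy, measure_empty, measure_empty]
  have hcompl : ρ'.real Eᶜ = ρ.real Eᶜ := by
    rw [probReal_compl_eq_one_sub hEm, probReal_compl_eq_one_sub hEm, measureReal_def,
      measureReal_def, ← Measure.restrict_apply_self, hrestrict, Measure.restrict_apply_self]
  have hint : ∀ ν : Measure Y, IsProbabilityMeasure ν → Integrable k ν := fun ν _ =>
    .of_bound (measurable_of_countable k).aestronglyMeasurable K (.of_forall hk)
  have hcomplBound : ∀ ν : Measure Y, IsProbabilityMeasure ν →
      |∫ y in Eᶜ, k y ∂ν| ≤ K * ν.real Eᶜ := fun ν _ => by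
    rw [← Real.norm_eq_abs]
    exact norm_setIntegral_le_of_norm_le_const (measure_lt_top _ _) fun y _ => hk y
  rw [← integral_add_compl hEm (hint ρ' inferInstance),
    ← integral_add_compl hEm (hint ρ inferInstance), hrestrict, add_sub_add_left_eq_sub]
  calc |∫ y in Eᶜ, k y ∂ρ' - ∫ y in Eᶜ, k y ∂ρ|
      ≤ |∫ y in Eᶜ, k y ∂ρ'| + |∫ y in Eᶜ, k y ∂ρ| := abs_sub _ _
    _ ≤ K * ρ'.real Eᶜ + K * ρ.real Eᶜ :=
      add_le_add (hcomplBound ρ' inferInstance) (hcomplBound ρ inferInstance)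
    _ = 2 * K * ρ.real Eᶜ := by rw [hcompl]; ring

theorem abs_integral_comp_sub_integral_comp_le {μ ν : Measure X} [IsProbabilityMeasure μ]
    [IsProbabilityMeasure ν] {π : X → Y} (hπ : Measurable π) {E : Set Y}
    (hE : ∀ y ∈ E, ν (π ⁻¹' {y}) = μ (π ⁻¹' {y}))
    {k : Y → ℝ} {K : ℝ} (hk : ∀ y, |k y| ≤ K) :
    |∫ x, k (π x) ∂ν - ∫ x, k (π x) ∂μ| ≤ 2 * K * μ.real (π ⁻¹' Eᶜ) := by
  have _ := μ.isProbabilityMeasure_map hπ.aemeasurable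
  have _ := ν.isProbabilityMeasure_map hπ.aemeasurable
  have hkm : Measurable k := measurable_of_countable k
  rw [← integral_map hπ.aemeasurable hkm.aestronglyMeasurable,
    ← integral_map hπ.aemeasurable hkm.aestronglyMeasurable,
    ← map_measureReal_apply hπ E.to_countable.measurableSet.compl]
  refine abs_integral_sub_integral_le_of_measure_singleton_eq (fun y hy => ?_) hk
  rw [Measure.map_apply hπ (measurableSet_singleton y),
    Measure.map_apply hπ (measurableSet_singleton y)]
  exact hE y hy

theorem abs_integral_sub_integral_le_fiberOsc {μ ν : Measure X} [IsProbabilityMeasure μ]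
    [IsProbabilityMeasure ν] {π : X → Y} (hπ : Measurable π) (r : Y → X) {E : Set Y}
    (hE : ∀ y ∈ E, ν (π ⁻¹' {y}) = μ (π ⁻¹' {y})) {f : X → ℝ} (hfm : Measurable f) {C : ℝ}
    (hf : ∀ x, |f x| ≤ C) :
    |∫ x, f x ∂ν - ∫ x, f x ∂μ| ≤
      2 * ∫ x, fiberOsc f π r (π x) ∂μ + 6 * C * μ.real (π ⁻¹' Eᶜ) := by
  set g : X → ℝ := fun x => f (r (π x))
  set w : X → ℝ := fun x => fiberOsc f π r (π x)
  have hint : ∀ {h : X → ℝ}, Measurable h → ∀ {K : ℝ}, (∀ x, |h x| ≤ K) →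
      ∀ ρ : Measure X, IsProbabilityMeasure ρ → Integrable h ρ :=
    fun hm _ hK _ _ => .of_bound hm.aestronglyMeasurable _ (.of_forall hK)
  have hg := hint (h := g) ((measurable_of_countable (f ∘ r)).comp hπ) fun x => hf (r (π x))
  have hosc : ∀ y, |fiberOsc f π r y| ≤ 2 * C := fun y => by
    rw [abs_of_nonneg (fiberOsc_nonneg _ _ _ _)]
    exact fiberOsc_le hf π r y
  have hw := hint (h := w) ((measurable_of_countable (fiberOsc f π r)).comp hπ) fun x =>
    hosc (π x)
  have hdev : ∀ ρ : Measure X, IsProbabilityMeasure ρ →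
      |∫ x, f x ∂ρ - ∫ x, g x ∂ρ| ≤ ∫ x, w x ∂ρ := fun ρ hρ => by
    rw [← integral_sub (hint hfm hf ρ hρ) (hg ρ hρ)]
    exact norm_integral_le_of_norm_le (f := fun x => f x - g x) (hw ρ hρ)
      (.of_forall (abs_sub_le_fiberOsc hf π r))
  have hwν : |∫ x, w x ∂ν - ∫ x, w x ∂μ| ≤ 2 * (2 * C) * μ.real (π ⁻¹' Eᶜ) :=
    abs_integral_comp_sub_integral_comp_le hπ hE hosc
  have hgν : |∫ x, g x ∂ν - ∫ x, g x ∂μ| ≤ 2 * C * μ.real (π ⁻¹' Eᶜ) :=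
    abs_integral_comp_sub_integral_comp_le hπ hE fun y => hf (r y)
  have hdevν := hdev ν inferInstance
  have hdevμ := hdev μ inferInstance
  rw [abs_le] at *
  constructor <;> linarith

end CountableQuotient

namespace PGame

variable {N S A : Type*} {G : PGame N S A}

instance : BorelSpace G.Play := ⟨rfl⟩

variable (G) in
def Move : Type _ := { x : S × A // x.2 ∈ G.act x.1 }

instance [Countable S] : Countable G.Move :=
  Function.Injective.countable (f := fun x : G.Move => (⟨x.1.1, x.1.2, x.2⟩ : Σ s, G.act s))
    fun ⟨⟨s, a⟩, _⟩ ⟨⟨t, b⟩, _⟩ h => by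
      obtain ⟨rfl, h⟩ := Sigma.mk.inj_iff.1 h
      simp only [heq_iff_eq, Subtype.mk.injEq] at h
      subst h
      rfl

instance : MeasurableSpace G.Move := ⊤

instance : DiscreteMeasurableSpace G.Move := ⟨fun _ => trivial⟩

def history (n : ℕ) (p : G.Play) : Fin n → G.Move := fun m => ⟨p.1 m, (p.2.2 m).1⟩

theorem history_preimage_singleton (n : ℕ) (p : G.Play) :
    history n ⁻¹' {history n p} = G.cylSet p n := by
  ext q
  simp only [history, cylSet, Set.mem_preimage, Set.mem_singleton_iff,
    funext_iff, Fin.forall_iff]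
  exact forall₂_congr fun _ _ => Subtype.mk_eq_mk

theorem isOpen_cylSet (p : G.Play) (n : ℕ) : IsOpen (G.cylSet p n) := by
  let _ : TopologicalSpace S := ⊥
  let _ : TopologicalSpace A := ⊥
  have _ : DiscreteTopology S := ⟨rfl⟩
  have _ : DiscreteTopology A := ⟨rfl⟩
  exact (PiNat.isOpen_cylinder _ p.1 n).preimage continuous_subtype_val

theorem exists_cylSet_subset_of_mem_nhds {p : G.Play} {V : Set G.Play} (hV : V ∈ 𝓝 p) :
    ∃ n, G.cylSet p n ⊆ V := by
  let _ : TopologicalSpace S := ⊥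
  let _ : TopologicalSpace A := ⊥
  have _ : DiscreteTopology S := ⟨rfl⟩
  have _ : DiscreteTopology A := ⟨rfl⟩
  obtain ⟨W, hW, hWV⟩ := mem_nhds_subtype _ _ _ |>.1 hV
  obtain ⟨_, ⟨x, n, rfl⟩, hpx, hxW⟩ := (PiNat.isTopologicalBasis_cylinders _).mem_nhds_iff.1 hW
  exact ⟨n, fun q hq => hWV (hxW fun m hm => (hq m hm).trans (hpx m hm))⟩

theorem measurable_history [Countable S] (n : ℕ) : Measurable (history (G := G) n) := by
  refine measurable_to_countable' fun y => ?_
  by_cases hy : y ∈ Set.range (history n)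
  · obtain ⟨p, rfl⟩ := hy
    rw [history_preimage_singleton]
    exact (isOpen_cylSet p n).measurableSet
  · rw [Set.preimage_singleton_eq_empty.2 hy]
    exact .empty

theorem measure_cylSet_eq_of_playFun_eq {μ : G.Profile → Measure G.Play}
    (hμ : G.IsInducedMeasure μ) {σ σ' : G.Profile} {p : G.Play} {n : ℕ}
    (h : ∀ m < n, G.playFun σ' (p.1 m).1 = G.playFun σ (p.1 m).1) :
    μ σ' (G.cylSet p n) = μ σ (G.cylSet p n) := by
  rw [hμ.2, hμ.2]
  exact Finset.prod_congr rfl fun m hm => by rw [h m (Finset.mem_range.1 hm)]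

theorem measure_history_preimage_eq_of_playFun_eq {μ : G.Profile → Measure G.Play}
    (hμ : G.IsInducedMeasure μ) {σ σ' : G.Profile} {n : ℕ} {y : Fin n → G.Move}
    (h : ∀ m, G.playFun σ' (y m).1.1 = G.playFun σ (y m).1.1) :
    μ σ' (history n ⁻¹' {y}) = μ σ (history n ⁻¹' {y}) := by
  by_cases hy : y ∈ Set.range (history n)
  · obtain ⟨p, rfl⟩ := hy
    rw [history_preimage_singleton]
    exact measure_cylSet_eq_of_playFun_eq hμ fun m hm => h ⟨m, hm⟩
  · simp [Set.preimage_singleton_eq_empty.2 hy]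

theorem isOpen_setOf_playFun_eq (σ : G.Profile) {F : Set S} (hF : F.Finite) :
    IsOpen {σ' : G.Profile | ∀ s ∈ F, G.playFun σ' s = G.playFun σ s} := by
  simp only [Set.ofPred_forall]
  refine hF.isOpen_biInter fun s _ => ?_
  let _ : TopologicalSpace A := ⊥
  have _ : DiscreteTopology A := ⟨rfl⟩
  have hcont : Continuous fun σ' : G.Profile => G.playFun σ' s :=
    ((continuous_apply s).comp continuous_subtype_val).comp (continuous_apply (G.ctrl s))
  exact (isOpen_discrete {G.playFun σ s}).preimage hcont

section Oscillation

variable [Nonempty G.Play]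

noncomputable def historyOsc (f : G.Play → ℝ) (n : ℕ) (p : G.Play) : ℝ :=
  fiberOsc f (history n) (Function.invFun (history n)) (history n p)

theorem tendsto_historyOsc {f : G.Play → ℝ} (hf : Continuous f) (p : G.Play) :
    Tendsto (fun n => historyOsc f n p) atTop (𝓝 0) := by
  refine tendsto_order.2 ⟨fun a ha => .of_forall fun n => ha.trans_le (fiberOsc_nonneg _ _ _ _),
    fun ε hε => ?_⟩
  obtain ⟨n₀, hn₀⟩ := exists_cylSet_subset_of_mem_nhds
    (hf.continuousAt.preimage_mem_nhds (Metric.ball_mem_nhds (f p) (by positivity : 0 < ε / 4)))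
  filter_upwards [eventually_ge_atTop n₀] with n hn
  have hnear : ∀ q, history n q = history n p → dist (f q) (f p) < ε / 4 := fun q hq => by
    have hq' : q ∈ G.cylSet p n := by rw [← history_preimage_singleton]; exact hq
    exact hn₀ fun m hm => hq' m (hm.trans_le hn)
  have hrep := hnear _ (Function.invFun_eq ⟨p, rfl⟩)
  refine (Real.iSup_le (fun q => ?_) (by positivity)).trans_lt (by linarith : ε / 2 < ε)
  rw [← Real.dist_eq]
  linarith [dist_triangle_right (f q) (f (Function.invFun (history n) (history n p))) (f p),
    hnear q q.2]

variable [Countable S]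

theorem tendsto_integral_historyOsc (ρ : Measure G.Play) [IsFiniteMeasure ρ] {f : G.Play → ℝ}
    (hf : Continuous f) {C : ℝ} (hC : ∀ p, |f p| ≤ C) :
    Tendsto (fun n => ∫ p, historyOsc f n p ∂ρ) atTop (𝓝 0) := by
  simpa using tendsto_integral_of_dominated_convergence (F := fun n => historyOsc f n)
    (fun _ => 2 * C)
    (fun n => ((measurable_of_countable _).comp (measurable_history n)).aestronglyMeasurable)
    (integrable_const _)
    (fun n => .of_forall fun p => by
      rw [Real.norm_eq_abs, historyOsc, abs_of_nonneg (fiberOsc_nonneg _ _ _ _)]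
      exact fiberOsc_le hC _ _ _)
    (.of_forall (tendsto_historyOsc hf))

theorem eventually_abs_integral_sub_le {μ : G.Profile → Measure G.Play}
    (hμ : G.IsInducedMeasure μ) (σ : G.Profile) {f : G.Play → ℝ} (hfm : Measurable f) {C : ℝ}
    (hf : ∀ p, |f p| ≤ C) (n : ℕ) {δ : ℝ} (hδ : 0 < δ) :
    ∀ᶠ σ' in 𝓝 σ, |∫ p, f p ∂μ σ' - ∫ p, f p ∂μ σ| ≤
      2 * ∫ p, historyOsc f n p ∂μ σ + 6 * C * δ := by
  have _ := hμ.1 σ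
  obtain ⟨E, hE⟩ := exists_finset_measure_compl_lt ((μ σ).map (history n))
    (ENNReal.ofReal_pos.2 hδ)
  rw [Measure.map_apply (measurable_history n) E.finite_toSet.measurableSet.compl] at hE
  set F : Set S := ⋃ y ∈ E, Set.range fun m => (y m).1.1
  have hF : F.Finite := E.finite_toSet.biUnion fun y _ => Set.finite_range _
  filter_upwards [(isOpen_setOf_playFun_eq σ hF).mem_nhds fun _ _ => rfl] with σ' hσ'
  have _ := hμ.1 σ'
  have hC : 0 ≤ C := (abs_nonneg _).trans (hf (Classical.arbitrary _))
  have hagree (y) (hy : y ∈ (E : Set (Fin n → G.Move))) :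
      μ σ' (history n ⁻¹' {y}) = μ σ (history n ⁻¹' {y}) :=
    measure_history_preimage_eq_of_playFun_eq hμ fun m => hσ' _ (Set.mem_biUnion hy ⟨m, rfl⟩)
  refine (abs_integral_sub_integral_le_fiberOsc (measurable_history n)
    (Function.invFun (history n)) hagree hfm hf).trans
    (add_le_add le_rfl (mul_le_mul_of_nonneg_left ?_ (by positivity)))
  exact ENNReal.toReal_le_of_le_ofReal hδ.le hE.le

end Oscillation

end PGame

theorem expected_payoff_continuous_general
    {N S A : Type*} [Countable S]
    (G : PGame N S A) (u : N → G.Play → ℝ)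
    (hu_bdd : ∀ i : N, ∃ C : ℝ, ∀ p : G.Play, |u i p| ≤ C)
    (hu_cont : ∀ i : N, Continuous (u i))
    (μ : G.Profile → MeasureTheory.Measure G.Play)
    (hμ : G.IsInducedMeasure μ) :
    ∀ i : N, Continuous (fun σ : G.Profile => G.epay μ u σ i) := by
  intro i
  obtain ⟨C, hC⟩ := hu_bdd i
  refine continuous_iff_continuousAt.2 fun σ => Metric.tendsto_nhds.2 fun ε hε => ?_
  have _ := hμ.1 σ
  have _ : Nonempty G.Play := nonempty_of_isProbabilityMeasure (μ σ)
  have hC0 : 0 ≤ C := (abs_nonneg _).trans (hC (Classical.arbitrary _))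
  set δ := ε / (6 * C + 3)
  have hδ : 0 < δ := by positivity
  have hεδ : (6 * C + 3) * δ = ε := mul_div_cancel₀ ε (by positivity)
  obtain ⟨n, hn⟩ := ((PGame.tendsto_integral_historyOsc (μ σ) (hu_cont i) hC).eventually_lt_const
    hδ).exists
  filter_upwards [PGame.eventually_abs_integral_sub_le hμ σ (hu_cont i).measurable hC n hδ]
    with σ' hσ'
  calc dist (G.epay μ u σ' i) (G.epay μ u σ i)
      ≤ 2 * ∫ p, PGame.historyOsc (u i) n p ∂μ σ + 6 * C * δ := hσ'
    _ < ε := by linarith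

/-- **Continuity of the expected payoff functions** (Lemma 1): in a multi-player
perfect-information game with probabilistic transitions, countable state space,
nonempty finite action sets, and bounded continuous payoff functions, every
player's expected payoff function `σ ↦ u_i(σ)` is continuous on the space of
strategy profiles. -/
theorem expected_payoff_continuous
    {N S A : Type*} [Finite N] [Countable S]
    (hN : 2 ≤ Nat.card N)
    (G : PGame N S A) (u : N → G.Play → ℝ)
    (hu_bdd : ∀ i : N, ∃ C : ℝ, ∀ p : G.Play, |u i p| ≤ C)
    (hu_cont : ∀ i : N, Continuous (u i))
    (μ : G.Profile → MeasureTheory.Measure G.Play)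
    (hμ : G.IsInducedMeasure μ) :
    ∀ i : N, Continuous (fun σ : G.Profile => G.epay μ u σ i) :=
  expected_payoff_continuous_general G u hu_bdd hu_cont μ hμ
end

section
/- Let N be a finite set with |N| ≥ 2 and let M ⊂ ℝ be a finite set with at least two elements. Put R = max_{m∈M} |m|, d = min{|m − m'| : m, m' ∈ M, m ≠ m'}, and δ = d/(2·|N|·R). Then for all functions x, y : N → M and every i ∈ N with x_i < y_i, one has x_i − δ·∑_{j∈N, j≠i} x_j < y_i − δ·∑_{j∈N, j≠i} y_j. -/
/-! The perturbation `δ · ∑_{j ≠ i} (y_j - x_j)` is at most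
`δ · (|N| - 1) · 2R = d · (1 - 1/|N|) < d`, while `y_i - x_i ≥ d` because `x_i ≠ y_i` lie in `M`. -/

open Finset

theorem Finset.abs_le_sSup_abs (M : Finset ℝ) {m : ℝ} (hm : m ∈ M) :
    |m| ≤ sSup {x : ℝ | ∃ m ∈ M, x = |m|} := by
  refine le_csSup ((M.finite_toSet.image (fun m => |m|)).subset ?_).bddAbove ⟨m, hm, rfl⟩
  rintro _ ⟨m, hm, rfl⟩
  exact ⟨m, hm, rfl⟩

theorem Finset.finite_setOf_abs_sub (M : Finset ℝ) :
    {x : ℝ | ∃ m ∈ M, ∃ m' ∈ M, m ≠ m' ∧ x = |m - m'|}.Finite := by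
  refine ((M.finite_toSet.prod M.finite_toSet).image (fun p => |p.1 - p.2|)).subset ?_
  rintro _ ⟨m, hm, m', hm', -, rfl⟩
  exact ⟨(m, m'), ⟨hm, hm'⟩, rfl⟩

theorem Finset.sInf_abs_sub_le (M : Finset ℝ) {m m' : ℝ} (hm : m ∈ M) (hm' : m' ∈ M)
    (hne : m ≠ m') :
    sInf {x : ℝ | ∃ m ∈ M, ∃ m' ∈ M, m ≠ m' ∧ x = |m - m'|} ≤ |m - m'| :=
  csInf_le (M.finite_setOf_abs_sub).bddBelow ⟨m, hm, m', hm', hne, rfl⟩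

theorem Finset.sInf_abs_sub_pos (M : Finset ℝ) {m m' : ℝ} (hm : m ∈ M) (hm' : m' ∈ M)
    (hne : m ≠ m') :
    0 < sInf {x : ℝ | ∃ m ∈ M, ∃ m' ∈ M, m ≠ m' ∧ x = |m - m'|} := by
  obtain ⟨a, -, b, -, hab, hgap⟩ :=
    Set.Nonempty.csInf_mem (s := {x : ℝ | ∃ m ∈ M, ∃ m' ∈ M, m ≠ m' ∧ x = |m - m'|})
      ⟨|m - m'|, m, hm, m', hm', hne, rfl⟩ M.finite_setOf_abs_sub
  rw [hgap]
  exact abs_pos.mpr (sub_ne_zero.mpr hab)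

theorem Finset.sum_sub_sum_le_card_mul {ι : Type*} (s : Finset ι) {R : ℝ} {x y : ι → ℝ}
    (hx : ∀ j ∈ s, |x j| ≤ R) (hy : ∀ j ∈ s, |y j| ≤ R) :
    ∑ j ∈ s, y j - ∑ j ∈ s, x j ≤ s.card * (2 * R) := by
  rw [← sum_sub_distrib, ← nsmul_eq_mul]
  refine sum_le_card_nsmul s _ _ fun j hj => ?_
  have := (abs_sub (y j) (x j)).trans (add_le_add (hy j hj) (hx j hj))
  linarith [le_abs_self (y j - x j)]

theorem sub_mul_sum_erase_lt_of_le_sub {N : Type*} [Fintype N] [DecidableEq N] {R d : ℝ}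
    (hd : 0 < d) {x y : N → ℝ} (hxR : ∀ j, |x j| ≤ R) (hyR : ∀ j, |y j| ≤ R) {i : N}
    (hxy : d ≤ y i - x i) :
    x i - d / (2 * Fintype.card N * R) * ∑ j ∈ univ.erase i, x j <
      y i - d / (2 * Fintype.card N * R) * ∑ j ∈ univ.erase i, y j := by
  set n : ℝ := (Fintype.card N : ℝ)
  set δ := d / (2 * n * R)
  have hR : 0 < R := by
    linarith [hxR i, hyR i, le_abs_self (y i), neg_abs_le (x i)]
  have hn : 0 < n := Nat.cast_pos.mpr (Fintype.card_pos_iff.mpr ⟨i⟩)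
  have hδ : 0 < δ := by positivity
  have hδn : δ * (2 * n * R) = d := div_mul_cancel₀ _ (by positivity)
  have hcard : ((univ.erase i).card : ℝ) = n - 1 := by
    rw [eq_sub_iff_add_eq, ← Nat.cast_add_one, card_erase_add_one (mem_univ i), card_univ]
  have hsum := (univ.erase i).sum_sub_sum_le_card_mul (fun j _ => hxR j) (fun j _ => hyR j)
  rw [hcard] at hsum
  have hpert : δ * ((n - 1) * (2 * R)) < d := by linarith [mul_pos hδ hR]
  have hδsum := mul_le_mul_of_nonneg_left hsum hδ.le
  rw [mul_sub] at hδsum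
  linarith

theorem delta_transform_strict_mono_general
    {N : Type*} [Fintype N] [DecidableEq N]
    (M : Finset ℝ)
    (R d δ : ℝ)
    (hR : R = sSup {x : ℝ | ∃ m ∈ M, x = |m|})
    (hd : d = sInf {x : ℝ | ∃ m ∈ M, ∃ m' ∈ M, m ≠ m' ∧ x = |m - m'|})
    (hδ : δ = d / (2 * (Fintype.card N : ℝ) * R))
    (x y : N → ℝ) (hx : ∀ j, x j ∈ M) (hy : ∀ j, y j ∈ M)
    (i : N) (hxy : x i < y i) :
    x i - δ * ∑ j ∈ Finset.univ.erase i, x j <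
      y i - δ * ∑ j ∈ Finset.univ.erase i, y j := by
  subst hR hd hδ
  have hne : x i ≠ y i := hxy.ne
  have hgap := M.sInf_abs_sub_le (hx i) (hy i) hne
  rw [abs_sub_comm, abs_of_pos (sub_pos.mpr hxy)] at hgap
  exact sub_mul_sum_erase_lt_of_le_sub (M.sInf_abs_sub_pos (hx i) (hy i) hne)
    (fun j => M.abs_le_sSup_abs (hx j)) (fun j => M.abs_le_sSup_abs (hy j)) hgap

/-- **The δ-transformation preserves strict payoff comparisons**: let `N` be a
finite set with `|N| ≥ 2` and `M ⊆ ℝ` a finite set with at least two elements.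
Put `R = max_{m∈M} |m|`, `d = min{|m − m'| : m,m' ∈ M, m ≠ m'}` and
`δ = d/(2·|N|·R)`.  Then for all functions `x, y : N → M` and every `i ∈ N` with
`x_i < y_i`, one has
`x_i − δ·∑_{j≠i} x_j < y_i − δ·∑_{j≠i} y_j`. -/
theorem delta_transform_strict_mono
    {N : Type*} [Fintype N] [DecidableEq N]
    (hN : 2 ≤ Fintype.card N)
    (M : Finset ℝ) (hM : 2 ≤ M.card)
    (R d δ : ℝ)
    (hR : R = sSup {x : ℝ | ∃ m ∈ M, x = |m|})
    (hd : d = sInf {x : ℝ | ∃ m ∈ M, ∃ m' ∈ M, m ≠ m' ∧ x = |m - m'|})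
    (hδ : δ = d / (2 * (Fintype.card N : ℝ) * R))
    (x y : N → ℝ) (hx : ∀ j, x j ∈ M) (hy : ∀ j, y j ∈ M)
    (i : N) (hxy : x i < y i) :
    x i - δ * ∑ j ∈ Finset.univ.erase i, x j <
      y i - δ * ∑ j ∈ Finset.univ.erase i, y j :=
  delta_transform_strict_mono_general M R d δ hR hd hδ x y hx hy i hxy
end

section
/- Suppose every payoff function u_i takes values in a finite set M ⊂ ℝ with at least two elements, and let R = max_{m∈M} |m|, d = min{|m − m'| : m, m' ∈ M, m ≠ m'}, δ = d/(2·|N|·R), and u_i^δ(σ) = u_i(σ) − δ·∑_{j∈N, j≠i} u_j(σ). If σ* is a Nash equilibrium with respect to the payoff functions (u_i^δ)_{i∈N}, then σ* is a Nash equilibrium and moreover a sum-secure equilibrium (in particular a secure equilibrium) with respect to the original payoff functions (u_i)_{i∈N}. -/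
/-!
If every payoff lies in the finite set `M`, a unilateral deviation changes the sum of the other
players' payoffs by at most `2 (|N| - 1) R`, so the penalty `δ · ∑_{j ≠ i} u_j` moves the
perturbed payoff by strictly less than `d`, the smallest gap between two values of `M`. A
profitable deviation in the original game gains at least `d`, so it stays profitable after the
perturbation; hence a Nash equilibrium of the perturbed game is one of the original game. When
the deviation leaves `u_i` unchanged, the perturbed payoff only sees `-δ · ∑_{j ≠ i} u_j`, and
`δ > 0` forces the others' total not to drop: this is sum-security, and a strict loss for one
opponent without gains for the others would lower that total.
-/

open Finset Function

noncomputable section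

namespace Finset

/-- The paper's `R = max_{m ∈ M} |m|`. -/
def maxAbs (M : Finset ℝ) : ℝ :=
  sSup {x : ℝ | ∃ m ∈ M, x = |m|}

/-- The paper's `d = min {|m - m'| : m, m' ∈ M, m ≠ m'}`. -/
def minGap (M : Finset ℝ) : ℝ :=
  sInf {x : ℝ | ∃ m ∈ M, ∃ m' ∈ M, m ≠ m' ∧ x = |m - m'|}

variable {M : Finset ℝ} {m m' : ℝ}

theorem abs_le_maxAbs (hm : m ∈ M) : |m| ≤ maxAbs M := by
  have hfin : {x : ℝ | ∃ m ∈ M, x = |m|}.Finite :=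
    (M.finite_toSet.image abs).subset fun x ⟨m, hm, hx⟩ => ⟨m, hm, hx.symm⟩
  exact le_csSup hfin.bddAbove ⟨m, hm, rfl⟩

theorem sub_le_two_mul_maxAbs (hm : m ∈ M) (hm' : m' ∈ M) : m - m' ≤ 2 * maxAbs M := by
  linarith [le_abs_self m, neg_abs_le m', abs_le_maxAbs hm, abs_le_maxAbs hm']

theorem maxAbs_pos (hM : 1 < #M) : 0 < maxAbs M := by
  obtain ⟨a, ha, hne⟩ := M.exists_mem_ne hM 0
  exact (abs_pos.mpr hne).trans_le (abs_le_maxAbs ha)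

private theorem finite_gaps (M : Finset ℝ) :
    {x : ℝ | ∃ m ∈ M, ∃ m' ∈ M, m ≠ m' ∧ x = |m - m'|}.Finite :=
  ((M.finite_toSet.prod M.finite_toSet).image fun p => |p.1 - p.2|).subset
    fun _ ⟨m, hm, m', hm', _, hx⟩ => ⟨(m, m'), ⟨hm, hm'⟩, hx.symm⟩

theorem minGap_le_abs_sub (hm : m ∈ M) (hm' : m' ∈ M) (hne : m ≠ m') :
    minGap M ≤ |m - m'| :=
  csInf_le (finite_gaps M).bddBelow ⟨m, hm, m', hm', hne, rfl⟩

theorem minGap_pos (hM : 1 < #M) : 0 < minGap M := by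
  obtain ⟨a, ha, b, hb, hab⟩ := one_lt_card.mp hM
  obtain ⟨m, -, m', -, hne, hgap⟩ :=
    Set.Nonempty.csInf_mem (s := {x : ℝ | ∃ m ∈ M, ∃ m' ∈ M, m ≠ m' ∧ x = |m - m'|})
      ⟨_, a, ha, b, hb, hab, rfl⟩ (finite_gaps M)
  rw [minGap, hgap]
  exact abs_pos.mpr (sub_ne_zero.mpr hne)

theorem le_of_sub_lt_minGap (hm : m ∈ M) (hm' : m' ∈ M) (h : m - m' < minGap M) : m ≤ m' := by
  by_contra! hlt
  have := minGap_le_abs_sub hm hm' hlt.ne'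
  rw [abs_of_pos (sub_pos.mpr hlt)] at this
  linarith

theorem perturbationWeight_pos (N : Type*) [Fintype N] [Nonempty N] (hM : 1 < #M) :
    0 < minGap M / (2 * Fintype.card N * maxAbs M) := by
  have := minGap_pos hM
  have := maxAbs_pos hM
  positivity

end Finset

section Game

variable {N : Type*} [Fintype N] [DecidableEq N] {St : N → Type*}

def othersSum (u : N → (∀ j, St j) → ℝ) (i : N) (σ : ∀ j, St j) : ℝ :=
  ∑ j ∈ univ.erase i, u j σ

def IsNashEquilibrium (w : N → (∀ j, St j) → ℝ) (σ : ∀ j, St j) : Prop :=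
  ∀ i (τi : St i), w i (update σ i τi) ≤ w i σ

def IsSumSecureEquilibrium (u : N → (∀ j, St j) → ℝ) (σ : ∀ j, St j) : Prop :=
  IsNashEquilibrium u σ ∧
    ∀ i (τi : St i), u i (update σ i τi) = u i σ →
      othersSum u i σ ≤ othersSum u i (update σ i τi)

def IsSecureEquilibrium (u : N → (∀ j, St j) → ℝ) (σ : ∀ j, St j) : Prop :=
  IsNashEquilibrium u σ ∧
    ¬ ∃ i, ∃ τi : St i, u i (update σ i τi) = u i σ ∧
      (∀ j, j ≠ i → u j (update σ i τi) ≤ u j σ) ∧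
      ∃ k, k ≠ i ∧ u k (update σ i τi) < u k σ

/-- The paper's `u^δ`. -/
def perturbed (u : N → (∀ j, St j) → ℝ) (δ : ℝ) : N → (∀ j, St j) → ℝ :=
  fun i σ => u i σ - δ * othersSum u i σ

variable {u : N → (∀ j, St j) → ℝ} {σ : ∀ j, St j}

theorem IsSumSecureEquilibrium.isSecureEquilibrium (h : IsSumSecureEquilibrium u σ) :
    IsSecureEquilibrium u σ := by
  refine ⟨h.1, fun ⟨i, τi, heq, hle, k, hki, hlt⟩ => ?_⟩
  have hdrop : othersSum u i (update σ i τi) < othersSum u i σ :=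
    sum_lt_sum (fun j hj => hle j (ne_of_mem_erase hj)) ⟨k, mem_erase.mpr ⟨hki, mem_univ k⟩, hlt⟩
  exact (h.2 i τi heq).not_gt hdrop

theorem othersSum_sub_le {M : Finset ℝ} (hu : ∀ i σ, u i σ ∈ M) (i : N) (σ σ' : ∀ j, St j) :
    othersSum u i σ' - othersSum u i σ ≤ (Fintype.card N - 1) * (2 * maxAbs M) := by
  calc othersSum u i σ' - othersSum u i σ = ∑ j ∈ univ.erase i, (u j σ' - u j σ) :=
        (sum_sub_distrib ..).symm
    _ ≤ ∑ _j ∈ univ.erase i, 2 * maxAbs M :=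
        sum_le_sum fun j _ => sub_le_two_mul_maxAbs (hu j σ') (hu j σ)
    _ = (Fintype.card N - 1) * (2 * maxAbs M) := by
        rw [sum_const, nsmul_eq_mul, cast_card_erase_of_mem (mem_univ i), card_univ]

section Perturbed

variable {δ : ℝ}

theorem IsNashEquilibrium.sub_le_of_perturbed (h : IsNashEquilibrium (perturbed u δ) σ)
    (i : N) (τi : St i) :
    u i (update σ i τi) - u i σ ≤ δ * (othersSum u i (update σ i τi) - othersSum u i σ) := by
  have := h i τi
  simp only [perturbed] at this
  linarith

theorem IsNashEquilibrium.of_perturbed {M : Finset ℝ} (hu : ∀ i σ, u i σ ∈ M)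
    (hδ : ∀ i σ', δ * (othersSum u i σ' - othersSum u i σ) < minGap M)
    (h : IsNashEquilibrium (perturbed u δ) σ) : IsNashEquilibrium u σ := fun i τi =>
  le_of_sub_lt_minGap (hu i _) (hu i σ) ((h.sub_le_of_perturbed i τi).trans_lt (hδ i _))

theorem IsNashEquilibrium.othersSum_le_of_perturbed (hδ : 0 < δ)
    (h : IsNashEquilibrium (perturbed u δ) σ) (i : N) (τi : St i)
    (heq : u i (update σ i τi) = u i σ) :
    othersSum u i σ ≤ othersSum u i (update σ i τi) := by
  have := h.sub_le_of_perturbed i τi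
  rw [heq, sub_self, mul_nonneg_iff_of_pos_left hδ] at this
  linarith

end Perturbed

section Weight

variable {M : Finset ℝ}

theorem perturbationWeight_mul_othersSum_sub_lt [Nonempty N] (hM : 1 < #M)
    (hu : ∀ i σ, u i σ ∈ M) (i : N) (σ σ' : ∀ j, St j) :
    minGap M / (2 * Fintype.card N * maxAbs M) * (othersSum u i σ' - othersSum u i σ) <
      minGap M := by
  set n : ℝ := (Fintype.card N : ℝ)
  have hn : 0 < n := Nat.cast_pos.mpr Fintype.card_pos
  have hR := maxAbs_pos hM
  calc minGap M / (2 * n * maxAbs M) * (othersSum u i σ' - othersSum u i σ)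
      ≤ minGap M / (2 * n * maxAbs M) * ((n - 1) * (2 * maxAbs M)) :=
        mul_le_mul_of_nonneg_left (othersSum_sub_le hu i σ σ') (perturbationWeight_pos N hM).le
    _ = minGap M - minGap M / n := by field_simp
    _ < minGap M := sub_lt_self _ (div_pos (minGap_pos hM) hn)

theorem IsNashEquilibrium.isSumSecureEquilibrium_of_perturbed (hM : 1 < #M)
    (hu : ∀ i σ, u i σ ∈ M)
    (h : IsNashEquilibrium (perturbed u (minGap M / (2 * Fintype.card N * maxAbs M))) σ) :
    IsSumSecureEquilibrium u σ := by
  refine ⟨fun i => ?_, fun i => ?_⟩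
  all_goals have : Nonempty N := ⟨i⟩
  · exact h.of_perturbed hu (perturbationWeight_mul_othersSum_sub_lt hM hu · σ) i
  · exact h.othersSum_le_of_perturbed (perturbationWeight_pos N hM) i

end Weight

end Game

end

theorem nash_of_delta_game_is_sum_secure_general
    {N : Type*} [Fintype N] [DecidableEq N]
    (St : N → Type*)
    (u : N → (∀ j, St j) → ℝ)
    (M : Finset ℝ) (hM : 2 ≤ M.card)
    (hu : ∀ (i : N) (σ : ∀ j, St j), u i σ ∈ M)
    (R d δ : ℝ)
    (hR : R = sSup {x : ℝ | ∃ m ∈ M, x = |m|})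
    (hd : d = sInf {x : ℝ | ∃ m ∈ M, ∃ m' ∈ M, m ≠ m' ∧ x = |m - m'|})
    (hδ : δ = d / (2 * (Fintype.card N : ℝ) * R))
    (uδ : N → (∀ j, St j) → ℝ)
    (huδ : ∀ (i : N) (σ : ∀ j, St j),
        uδ i σ = u i σ - δ * ∑ j ∈ Finset.univ.erase i, u j σ)
    (σ : ∀ j, St j)
    (hnashδ : ∀ (i : N) (τi : St i), uδ i (Function.update σ i τi) ≤ uδ i σ) :
    -- `σ*` is a Nash equilibrium for the original payoffs
    (∀ (i : N) (τi : St i), u i (Function.update σ i τi) ≤ u i σ) ∧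
    -- `σ*` is a sum-secure equilibrium for the original payoffs
    (∀ (i : N) (τi : St i),
        u i (Function.update σ i τi) = u i σ →
        ∑ j ∈ Finset.univ.erase i, u j σ ≤
          ∑ j ∈ Finset.univ.erase i, u j (Function.update σ i τi)) ∧
    -- `σ*` is a secure equilibrium for the original payoffs
    ¬ ∃ (i : N) (τi : St i),
        u i (Function.update σ i τi) = u i σ ∧
        (∀ j : N, j ≠ i → u j (Function.update σ i τi) ≤ u j σ) ∧
        (∃ k : N, k ≠ i ∧ u k (Function.update σ i τi) < u k σ) := by
  obtain rfl : R = maxAbs M := hR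
  obtain rfl : d = minGap M := hd
  obtain rfl : uδ = perturbed u δ := funext fun i => funext (huδ i)
  subst hδ
  have hsec : IsSumSecureEquilibrium u σ :=
    IsNashEquilibrium.isSumSecureEquilibrium_of_perturbed hM hu hnashδ
  exact ⟨hsec.1, hsec.2, hsec.isSecureEquilibrium.2⟩

/-- **The δ-transformation yields sum-secure equilibria**: suppose every payoff
function `u i` takes values in a finite set `M ⊆ ℝ` with at least two elements,
let `R = max_{m∈M} |m|`, `d = min{|m−m'| : m,m' ∈ M, m ≠ m'}`, `δ = d/(2·|N|·R)`,
and `u^δ_i(σ) = u_i(σ) − δ·∑_{j≠i} u_j(σ)`.  If `σ*` is a Nash equilibrium with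
respect to the payoffs `u^δ`, then `σ*` is a Nash equilibrium, a sum-secure
equilibrium, and a secure equilibrium with respect to the original payoffs `u`. -/
theorem nash_of_delta_game_is_sum_secure
    {N : Type*} [Fintype N] [DecidableEq N]
    (hN : 2 ≤ Fintype.card N)
    (St : N → Type*) [∀ i, Nonempty (St i)]
    (u : N → (∀ j, St j) → ℝ)
    (M : Finset ℝ) (hM : 2 ≤ M.card)
    (hu : ∀ (i : N) (σ : ∀ j, St j), u i σ ∈ M)
    (R d δ : ℝ)
    (hR : R = sSup {x : ℝ | ∃ m ∈ M, x = |m|})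
    (hd : d = sInf {x : ℝ | ∃ m ∈ M, ∃ m' ∈ M, m ≠ m' ∧ x = |m - m'|})
    (hδ : δ = d / (2 * (Fintype.card N : ℝ) * R))
    (uδ : N → (∀ j, St j) → ℝ)
    (huδ : ∀ (i : N) (σ : ∀ j, St j),
        uδ i σ = u i σ - δ * ∑ j ∈ Finset.univ.erase i, u j σ)
    (σ : ∀ j, St j)
    (hnashδ : ∀ (i : N) (τi : St i), uδ i (Function.update σ i τi) ≤ uδ i σ) :
    -- `σ*` is a Nash equilibrium for the original payoffs
    (∀ (i : N) (τi : St i), u i (Function.update σ i τi) ≤ u i σ) ∧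
    -- `σ*` is a sum-secure equilibrium for the original payoffs
    (∀ (i : N) (τi : St i),
        u i (Function.update σ i τi) = u i σ →
        ∑ j ∈ Finset.univ.erase i, u j σ ≤
          ∑ j ∈ Finset.univ.erase i, u j (Function.update σ i τi)) ∧
    -- `σ*` is a secure equilibrium for the original payoffs
    ¬ ∃ (i : N) (τi : St i),
        u i (Function.update σ i τi) = u i σ ∧
        (∀ j : N, j ≠ i → u j (Function.update σ i τi) ≤ u j σ) ∧
        (∃ k : N, k ≠ i ∧ u k (Function.update σ i τi) < u k σ) :=
  nash_of_delta_game_is_sum_secure_general St u M hM hu R d δ hR hd hδ uδ huδ σ hnashδ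
end
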